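/- arXiv:1503.08326 — 3 statements merged into one kernel-verified Lean document; each statement's English description precedes it below -/
import Mathlib

section
/- Let an endorsement structure be given (see context). For every pair of 0-cells (x,T) and (y,T') of the associated Eng-construction, the 1-cells from (x,T) to (y,T') together with the 2-cells between them form a category: vertical composition of 2-cells F : (f,S) ⇒ (g,S') and F' : (g,S') ⇒ (h,S'') is the intersection F ∩ F' (which is again a 2-cell (f,S) ⇒ (h,S'')), this composition is associative, and the identity 2-cell on a 1-cell (f,S) is the set S itself. -/
/-!
Statement 0: For an endorsement structure, and any pair of 0-cells (x,T), (y,T') of the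
associated Eng-construction, the 1-cells from (x,T) to (y,T') and the 2-cells between them
form a category: vertical composition of 2-cells is intersection of author sets (which is
again a 2-cell), this composition is associative, and the identity 2-cell on a 1-cell (f,S)
is the set S itself (in particular the unit laws hold).
-/

open CategoryTheory

universe u v w

/-- An endorsement structure: a category `E`, a type `A` of authors, endorsement predicates
on objects and morphisms, and for each author an equivalence relation `eqv` on endorsed
parallel morphisms, compatible with composition. -/
structure EndorsementStructure where
  /-- the underlying category -/
  E : Type u
  /-- the category structure -/
  [instCat : Category.{v} E]
  /-- the type of authors -/
  A : Type w
  /-- `a` endorses an object -/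
  endObj : A → E → Prop
  /-- `a` endorses a morphism -/
  endMor : ∀ (a : A) {x y : E}, (x ⟶ y) → Prop
  endMor_src : ∀ (a : A) {x y : E} (f : x ⟶ y), endMor a f → endObj a x
  endMor_tgt : ∀ (a : A) {x y : E} (f : x ⟶ y), endMor a f → endObj a y
  endMor_id : ∀ (a : A) (x : E), endObj a x → endMor a (𝟙 x)
  endMor_comp : ∀ (a : A) {x y z : E} (f : x ⟶ y) (g : y ⟶ z),
    endMor a f → endMor a g → endMor a (f ≫ g)
  /-- the relation `≃ₐ` on parallel morphisms -/
  eqv : ∀ (a : A) {x y : E}, (x ⟶ y) → (x ⟶ y) → Prop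
  eqv_refl : ∀ (a : A) {x y : E} (f : x ⟶ y), endMor a f → eqv a f f
  eqv_symm : ∀ (a : A) {x y : E} (f g : x ⟶ y), eqv a f g → eqv a g f
  eqv_trans : ∀ (a : A) {x y : E} (f g h : x ⟶ y), eqv a f g → eqv a g h → eqv a f h
  eqv_comp : ∀ (a : A) {x y z : E} (f f' : x ⟶ y) (g g' : y ⟶ z),
    eqv a f f' → eqv a g g' → eqv a (f ≫ g) (f' ≫ g')

attribute [instance] EndorsementStructure.instCat

namespace EndorsementStructure

variable (ε : EndorsementStructure.{u, v, w})

/-- `(x, T)` is a 0-cell ("type") of the Eng-construction. -/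
def IsType (x : ε.E) (T : Set ε.A) : Prop :=
  ∀ a ∈ T, ε.endObj a x

/-- `(f, S)` is a 1-cell ("aspect") of the Eng-construction from `(x,T)` to `(y,T')`. -/
def IsAspect {x y : ε.E} (T T' : Set ε.A) (f : x ⟶ y) (S : Set ε.A) : Prop :=
  S ⊆ T ∩ T' ∧ ∀ a ∈ S, ε.endMor a f

/-- `F` is a 2-cell ("fact") of the Eng-construction from the 1-cell `(f,S)` to the
parallel 1-cell `(g,S')`. -/
def IsFact {x y : ε.E} (f : x ⟶ y) (S : Set ε.A) (g : x ⟶ y) (S' : Set ε.A)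
    (F : Set ε.A) : Prop :=
  F ⊆ S ∩ S' ∧ ∀ a ∈ F, ε.eqv a f g

end EndorsementStructure

/-- For every pair of 0-cells `(x,T)` and `(y,T')` of the Eng-construction,
the 1-cells from `(x,T)` to `(y,T')` together with the 2-cells between them form a category:
(1) the vertical composite of 2-cells `F : (f,S) ⇒ (g,S')` and `F' : (g,S') ⇒ (h,S'')`,
namely the intersection `F ∩ F'`, is again a 2-cell `(f,S) ⇒ (h,S'')`;
(2) this composition is associative;
(3) the set `S` itself is a 2-cell `(f,S) ⇒ (f,S)`, and
(4) it is a two-sided unit for vertical composition. -/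
theorem eng_hom_category (ε : EndorsementStructure.{u, v, w}) {x y : ε.E}
    (T T' : Set ε.A) (hx : ε.IsType x T) (hy : ε.IsType y T') :
    -- (1) vertical composition is intersection, and is again a 2-cell
    (∀ (f g h : x ⟶ y) (S S' S'' : Set ε.A),
      ε.IsAspect T T' f S → ε.IsAspect T T' g S' → ε.IsAspect T T' h S'' →
      ∀ (F F' : Set ε.A),
        ε.IsFact f S g S' F → ε.IsFact g S' h S'' F' →
        ε.IsFact f S h S'' (F ∩ F')) ∧
    -- (2) vertical composition is associative
    (∀ (f g h k : x ⟶ y) (S S' S'' S''' : Set ε.A) (F F' F'' : Set ε.A),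
      ε.IsFact f S g S' F → ε.IsFact g S' h S'' F' → ε.IsFact h S'' k S''' F'' →
        (F ∩ F') ∩ F'' = F ∩ (F' ∩ F'')) ∧
    -- (3) the identity 2-cell on a 1-cell `(f,S)` is the set `S` itself
    (∀ (f : x ⟶ y) (S : Set ε.A), ε.IsAspect T T' f S → ε.IsFact f S f S S) ∧
    -- (4) unit laws for vertical composition
    (∀ (f g : x ⟶ y) (S S' : Set ε.A) (F : Set ε.A),
      ε.IsAspect T T' f S → ε.IsAspect T T' g S' → ε.IsFact f S g S' F →
        S ∩ F = F ∧ F ∩ S' = F) := by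
  refine ⟨?_, ?_, ?_, ?_⟩
  · rintro f g h S S' S'' _ _ _ F F' ⟨hF1, hF2⟩ ⟨hF'1, hF'2⟩
    constructor
    · intro a ⟨haF, haF'⟩
      exact ⟨(hF1 haF).1, (hF'1 haF').2⟩
    · intro a ⟨haF, haF'⟩
      exact ε.eqv_trans a f g h (hF2 a haF) (hF'2 a haF')
  · intro f g h k S S' S'' S''' F F' F'' _ _ _
    exact Set.inter_assoc F F' F''
  · rintro f S ⟨hS1, hS2⟩
    exact ⟨fun a ha => ⟨ha, ha⟩, fun a ha => ε.eqv_refl a f (hS2 a ha)⟩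
  · rintro f g S S' F _ _ ⟨hF1, hF2⟩
    constructor
    · ext a; exact ⟨fun h => h.2, fun h => ⟨(hF1 h).1, h⟩⟩
    · ext a; exact ⟨fun h => h.1, fun h => ⟨h, (hF1 h).2⟩⟩
end

section
/- Let an endorsement structure be given (see context). The associated Eng-construction forms a bicategory: its hom-categories are as described in the context, with vertical composition of 2-cells given by intersection of author sets and identity 2-cell on (f,S) equal to S; horizontal composition sends a pair of composable 1-cells (f,S) : (x,T) → (y,T') and (g,S') : (y,T') → (z,T'') to (f ≫ g, S ∩ S') and a pair of horizontally composable 2-cells F, F' to F ∩ F'; the identity 1-cell on (x,T) is (𝟙_x, T); and the associator and unitor 2-cells (given by the full author set of the corresponding composite 1-cell) are invertible and satisfy the pentagon and triangle coherence axioms. -/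
/-!
Statement 1: The Eng-construction associated to an endorsement structure forms a
bicategory: hom-categories with vertical composition by intersection of author sets,
horizontal composition by composition in `E` and intersection of author sets,
identity 1-cells `(𝟙 x, T)`, with invertible associators and unitors (given by the
full author set of the corresponding composite 1-cell) satisfying the pentagon and
triangle coherence axioms.
-/

open CategoryTheory

universe u v w

/-- The Eng-construction forms a bicategory. -/
theorem eng_bicategory (ε : EndorsementStructure.{u, v, w}) :
    -- (1) Hom-categories: vertical composition of 2-cells is intersection of author sets,
    -- is again a 2-cell, is associative, and the identity 2-cell on `(f,S)` is `S`,
    -- which is a two-sided unit.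
    (∀ {x y : ε.E} (T T' : Set ε.A), ε.IsType x T → ε.IsType y T' →
      (∀ (f g h : x ⟶ y) (S S' S'' F F' : Set ε.A),
        ε.IsAspect T T' f S → ε.IsAspect T T' g S' → ε.IsAspect T T' h S'' →
        ε.IsFact f S g S' F → ε.IsFact g S' h S'' F' →
        ε.IsFact f S h S'' (F ∩ F')) ∧
      (∀ (F F' F'' : Set ε.A), (F ∩ F') ∩ F'' = F ∩ (F' ∩ F'')) ∧
      (∀ (f : x ⟶ y) (S : Set ε.A), ε.IsAspect T T' f S → ε.IsFact f S f S S) ∧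
      (∀ (f g : x ⟶ y) (S S' F : Set ε.A),
        ε.IsAspect T T' f S → ε.IsAspect T T' g S' → ε.IsFact f S g S' F →
        S ∩ F = F ∧ F ∩ S' = F)) ∧
    -- (2) Horizontal composition of 1-cells:
    -- `(f,S) : (x,T) → (y,T')` and `(g,S') : (y,T') → (z,T'')` compose to
    -- `(f ≫ g, S ∩ S') : (x,T) → (z,T'')`.
    (∀ {x y z : ε.E} (T T' T'' : Set ε.A) (f : x ⟶ y) (g : y ⟶ z) (S S' : Set ε.A),
      ε.IsType x T → ε.IsType y T' → ε.IsType z T'' →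
      ε.IsAspect T T' f S → ε.IsAspect T' T'' g S' →
      ε.IsAspect T T'' (f ≫ g) (S ∩ S')) ∧
    -- (3) Horizontal composition of 2-cells: `F ⇒ F'` horizontally compose to `F ∩ F'`.
    (∀ {x y z : ε.E} (T T' T'' : Set ε.A)
      (f f' : x ⟶ y) (g g' : y ⟶ z) (S₁ S₁' S₂ S₂' F F' : Set ε.A),
      ε.IsType x T → ε.IsType y T' → ε.IsType z T'' →
      ε.IsAspect T T' f S₁ → ε.IsAspect T T' f' S₁' →
      ε.IsAspect T' T'' g S₂ → ε.IsAspect T' T'' g' S₂' →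
      ε.IsFact f S₁ f' S₁' F → ε.IsFact g S₂ g' S₂' F' →
      ε.IsFact (f ≫ g) (S₁ ∩ S₂) (f' ≫ g') (S₁' ∩ S₂') (F ∩ F')) ∧
    -- (4) Identity 1-cells: the identity 1-cell on `(x,T)` is `(𝟙 x, T)`.
    (∀ (x : ε.E) (T : Set ε.A), ε.IsType x T → ε.IsAspect T T (𝟙 x) T) ∧
    -- (5) Associators: for composable 1-cells `(f,S₁)`, `(g,S₂)`, `(h,S₃)`, the full author
    -- set `S₁ ∩ S₂ ∩ S₃` of the composite is a 2-cell
    -- `((f ≫ g) ≫ h, (S₁ ∩ S₂) ∩ S₃) ⇒ (f ≫ (g ≫ h), S₁ ∩ (S₂ ∩ S₃))`, and it is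
    -- invertible: the same set is a 2-cell in the opposite direction and the two vertical
    -- composites are the respective identity 2-cells.
    (∀ {x y z w : ε.E} (T₀ T₁ T₂ T₃ : Set ε.A)
      (f : x ⟶ y) (g : y ⟶ z) (h : z ⟶ w) (S₁ S₂ S₃ : Set ε.A),
      ε.IsType x T₀ → ε.IsType y T₁ → ε.IsType z T₂ → ε.IsType w T₃ →
      ε.IsAspect T₀ T₁ f S₁ → ε.IsAspect T₁ T₂ g S₂ → ε.IsAspect T₂ T₃ h S₃ →
      ε.IsFact ((f ≫ g) ≫ h) ((S₁ ∩ S₂) ∩ S₃) (f ≫ (g ≫ h)) (S₁ ∩ (S₂ ∩ S₃))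
        (S₁ ∩ S₂ ∩ S₃) ∧
      ε.IsFact (f ≫ (g ≫ h)) (S₁ ∩ (S₂ ∩ S₃)) ((f ≫ g) ≫ h) ((S₁ ∩ S₂) ∩ S₃)
        (S₁ ∩ S₂ ∩ S₃) ∧
      (S₁ ∩ S₂ ∩ S₃) ∩ (S₁ ∩ S₂ ∩ S₃) = (S₁ ∩ S₂) ∩ S₃ ∧
      (S₁ ∩ S₂ ∩ S₃) ∩ (S₁ ∩ S₂ ∩ S₃) = S₁ ∩ (S₂ ∩ S₃)) ∧
    -- (6) Left unitors: the full author set `T ∩ S` of the composite `(𝟙 x ≫ f, T ∩ S)`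
    -- is an invertible 2-cell `(𝟙 x ≫ f, T ∩ S) ⇒ (f, S)`.
    (∀ {x y : ε.E} (T T' : Set ε.A) (f : x ⟶ y) (S : Set ε.A),
      ε.IsType x T → ε.IsType y T' → ε.IsAspect T T' f S →
      ε.IsFact (𝟙 x ≫ f) (T ∩ S) f S (T ∩ S) ∧
      ε.IsFact f S (𝟙 x ≫ f) (T ∩ S) (T ∩ S) ∧
      (T ∩ S) ∩ (T ∩ S) = T ∩ S ∧
      (T ∩ S) ∩ (T ∩ S) = S) ∧
    -- (7) Right unitors: the full author set `S ∩ T'` of the composite `(f ≫ 𝟙 y, S ∩ T')`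
    -- is an invertible 2-cell `(f ≫ 𝟙 y, S ∩ T') ⇒ (f, S)`.
    (∀ {x y : ε.E} (T T' : Set ε.A) (f : x ⟶ y) (S : Set ε.A),
      ε.IsType x T → ε.IsType y T' → ε.IsAspect T T' f S →
      ε.IsFact (f ≫ 𝟙 y) (S ∩ T') f S (S ∩ T') ∧
      ε.IsFact f S (f ≫ 𝟙 y) (S ∩ T') (S ∩ T') ∧
      (S ∩ T') ∩ (S ∩ T') = S ∩ T' ∧
      (S ∩ T') ∩ (S ∩ T') = S) ∧
    -- (8) Pentagon: for four composable 1-cells with author sets `S₁, S₂, S₃, S₄`, the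
    -- composite 2-cell `(α ▷ -) ≫ α ≫ (- ◁ α)` equals the composite `α ≫ α`.
    (∀ {v x y z w : ε.E} (T₀ T₁ T₂ T₃ T₄ : Set ε.A)
      (f : v ⟶ x) (g : x ⟶ y) (h : y ⟶ z) (i : z ⟶ w) (S₁ S₂ S₃ S₄ : Set ε.A),
      ε.IsType v T₀ → ε.IsType x T₁ → ε.IsType y T₂ → ε.IsType z T₃ → ε.IsType w T₄ →
      ε.IsAspect T₀ T₁ f S₁ → ε.IsAspect T₁ T₂ g S₂ →
      ε.IsAspect T₂ T₃ h S₃ → ε.IsAspect T₃ T₄ i S₄ →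
      ((S₁ ∩ S₂ ∩ S₃) ∩ S₄) ∩ (S₁ ∩ (S₂ ∩ S₃) ∩ S₄) ∩ (S₁ ∩ (S₂ ∩ S₃ ∩ S₄)) =
        ((S₁ ∩ S₂) ∩ S₃ ∩ S₄) ∩ (S₁ ∩ S₂ ∩ (S₃ ∩ S₄))) ∧
    -- (9) Triangle: for `(f,S₁) : (x,T) → (y,T')` and `(g,S₂) : (y,T') → (z,T'')`, the
    -- composite 2-cell `α ≫ (- ◁ λ)` equals the 2-cell `ρ ▷ -`.
    (∀ {x y z : ε.E} (T T' T'' : Set ε.A) (f : x ⟶ y) (g : y ⟶ z) (S₁ S₂ : Set ε.A),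
      ε.IsType x T → ε.IsType y T' → ε.IsType z T'' →
      ε.IsAspect T T' f S₁ → ε.IsAspect T' T'' g S₂ →
      (S₁ ∩ T' ∩ S₂) ∩ (S₁ ∩ (T' ∩ S₂)) = (S₁ ∩ T') ∩ S₂) := by
  refine ⟨?_, ?_, ?_, ?_, ?_, ?_, ?_, ?_, ?_⟩
  · intro x y T T' hT hT'
    refine ⟨?_, ?_, ?_, ?_⟩
    · intro f g h S S' S'' F F' hf hg hh hF hF'
      refine ⟨fun a ha => ⟨(hF.1 ha.1).1, (hF'.1 ha.2).2⟩,
        fun a ha => ε.eqv_trans a f g h (hF.2 a ha.1) (hF'.2 a ha.2)⟩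
    · intro F F' F''; exact Set.inter_assoc F F' F''
    · intro f S hS
      exact ⟨fun a ha => ⟨ha, ha⟩, fun a ha => ε.eqv_refl a f (hS.2 a ha)⟩
    · intro f g S S' F hf hg hF
      constructor
      · ext a; exact ⟨fun h => h.2, fun h => ⟨(hF.1 h).1, h⟩⟩
      · ext a; exact ⟨fun h => h.1, fun h => ⟨h, (hF.1 h).2⟩⟩
  · intro x y z T T' T'' f g S S' hT hT' hT'' hf hg
    exact ⟨fun a ha => ⟨(hf.1 ha.1).1, (hg.1 ha.2).2⟩,
      fun a ha => ε.endMor_comp a f g (hf.2 a ha.1) (hg.2 a ha.2)⟩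
  · intro x y z T T' T'' f f' g g' S₁ S₁' S₂ S₂' F F' hT hT' hT'' hf hf' hg hg' hF hF'
    refine ⟨fun a ha => ⟨⟨(hF.1 ha.1).1, (hF'.1 ha.2).1⟩, ⟨(hF.1 ha.1).2, (hF'.1 ha.2).2⟩⟩,
      fun a ha => ε.eqv_comp a f f' g g' (hF.2 a ha.1) (hF'.2 a ha.2)⟩
  · intro x T hT
    exact ⟨fun a ha => ⟨ha, ha⟩, fun a ha => ε.endMor_id a x (hT a ha)⟩
  · intro x y z w T₀ T₁ T₂ T₃ f g h S₁ S₂ S₃ h0 h1 h2 h3 hf hg hh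
    have e : ∀ a ∈ S₁ ∩ S₂ ∩ S₃, ε.eqv a ((f ≫ g) ≫ h) (f ≫ (g ≫ h)) := by
      intro a ha
      have := ε.eqv_refl a ((f ≫ g) ≫ h)
        (ε.endMor_comp a _ _ (ε.endMor_comp a _ _ (hf.2 a ha.1.1) (hg.2 a ha.1.2))
          (hh.2 a ha.2))
      simpa [Category.assoc] using this
    refine ⟨⟨fun a ha => ⟨ha, ⟨ha.1.1, ha.1.2, ha.2⟩⟩, e⟩,
      ⟨fun a ha => ⟨⟨ha.1.1, ha.1.2, ha.2⟩, ha⟩,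
        fun a ha => ε.eqv_symm a _ _ (e a ha)⟩, ?_, ?_⟩ <;> ext a <;>
      simp +contextual [and_assoc] <;> tauto
  · intro x y T T' f S hT hT' hf
    have e : ∀ a ∈ T ∩ S, ε.eqv a (𝟙 x ≫ f) f := by
      intro a ha
      simpa using ε.eqv_refl a (𝟙 x ≫ f)
        (ε.endMor_comp a _ _ (ε.endMor_id a x (hT a ha.1)) (hf.2 a ha.2))
    refine ⟨⟨fun a ha => ⟨ha, ha.2⟩, e⟩,
      ⟨fun a ha => ⟨ha.2, ha⟩, fun a ha => ε.eqv_symm a _ _ (e a ha)⟩,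
      Set.inter_self _, ?_⟩
    ext a
    exact ⟨fun h => h.1.2, fun h => ⟨⟨(hf.1 h).1, h⟩, (hf.1 h).1, h⟩⟩
  · intro x y T T' f S hT hT' hf
    have e : ∀ a ∈ S ∩ T', ε.eqv a (f ≫ 𝟙 y) f := by
      intro a ha
      simpa using ε.eqv_refl a (f ≫ 𝟙 y)
        (ε.endMor_comp a _ _ (hf.2 a ha.1) (ε.endMor_id a y (hT' a ha.2)))
    refine ⟨⟨fun a ha => ⟨ha, ha.1⟩, e⟩,
      ⟨fun a ha => ⟨ha.1, ha⟩, fun a ha => ε.eqv_symm a _ _ (e a ha)⟩,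
      Set.inter_self _, ?_⟩
    ext a
    exact ⟨fun h => h.1.1, fun h => ⟨⟨h, (hf.1 h).2⟩, h, (hf.1 h).2⟩⟩
  · intro v x y z w T₀ T₁ T₂ T₃ T₄ f g h i S₁ S₂ S₃ S₄ _ _ _ _ _ _ _ _ _
    ext a; simp only [Set.mem_inter_iff]; tauto
  · intro x y z T T' T'' f g S₁ S₂ _ _ _ hf hg
    ext a; simp only [Set.mem_inter_iff]; tauto
end

section
/- Let an instantiated endorsement structure be given (see context). The associated iEng-construction forms a bicategory: vertical composition of 2-cells is intersection of author sets (well-defined since parallel 2-cells only exist between 1-cells with equal token functions); horizontal composition sends composable 1-cells ((f,S),φ) and ((g,S'),ψ) to ((f ≫ g, S ∩ S'), ψ ∘ φ) (the condition that (t, ψ(φ t)) is an (f ≫ g)-correspondence according to every a ∈ S ∩ S' holds by the composition axiom) and pairs of horizontally composable 2-cells to their intersection; the identity 1-cell on (x,T,𝕋) is ((𝟙_x, T), id_𝕋) (well-defined by the identity axiom); and the resulting associators and unitors are invertible and satisfy the pentagon and triangle coherence axioms. -/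
/-!
Statement 3: The iEng-construction associated to an instantiated endorsement structure
forms a bicategory.
-/

open CategoryTheory

universe u v w

universe t

/-- An instantiated endorsement structure: an endorsement structure together with a type of
tokens, an endorsement relation for tokens, and correspondence relations for endorsed
morphisms, satisfying functionality, composition and identity axioms. -/
structure InstEndorsementStructure extends EndorsementStructure.{u, v, w} where
  /-- the type of tokens -/
  Tok : Type t
  /-- `a` endorses `t` as a token of `x` -/
  endTok : A → Tok → E → Prop
  /-- `(t, u)` is an `f`-correspondence according to `a` -/
  corr : ∀ (a : A) {x y : E}, (x ⟶ y) → Tok → Tok → Prop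
  corr_functional : ∀ (a : A) {x y : E} (f : x ⟶ y), endMor a f →
    ∀ t : Tok, endTok a t x → ∃! u : Tok, endTok a u y ∧ corr a f t u
  corr_comp : ∀ (a : A) {x y z : E} (f : x ⟶ y) (g : y ⟶ z) (t u v : Tok),
    corr a f t u → corr a g u v → corr a (f ≫ g) t v
  corr_id : ∀ (a : A) (x : E) (t : Tok), endTok a t x → corr a (𝟙 x) t t

namespace InstEndorsementStructure

variable (ε : InstEndorsementStructure.{u, v, w, t})

/-- `(x, T, 𝕋)` is a 0-cell of the iEng-construction: `(x,T)` is an Eng 0-cell and `𝕋` is a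
set of tokens each of which every `a ∈ T` endorses as a token of `x`. -/
def IsIType (x : ε.E) (T : Set ε.A) (𝕋 : Set ε.Tok) : Prop :=
  ε.IsType x T ∧ ∀ t ∈ 𝕋, ∀ a ∈ T, ε.endTok a t x

/-- `((f, S), φ)` is a 1-cell of the iEng-construction from `(x,T,𝕋)` to `(y,T',𝕋')`:
`(f,S)` is an Eng 1-cell and `φ : 𝕋 → 𝕋'` is a function such that `(t, φ t)` is an
`f`-correspondence according to every `a ∈ S`. -/
def IsIAspect {x y : ε.E} (T T' : Set ε.A) (𝕋 𝕋' : Set ε.Tok)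
    (f : x ⟶ y) (S : Set ε.A) (φ : 𝕋 → 𝕋') : Prop :=
  ε.IsAspect T T' f S ∧ ∀ (t : 𝕋), ∀ a ∈ S, ε.corr a f t.1 (φ t).1

/-- `F` is a 2-cell of the iEng-construction from `((f,S),φ)` to `((g,S'),ψ)`: it is an Eng
2-cell from `(f,S)` to `(g,S')`, existing only when `φ = ψ`. -/
def IsIFact {x y : ε.E} (𝕋 𝕋' : Set ε.Tok)
    (f : x ⟶ y) (S : Set ε.A) (φ : 𝕋 → 𝕋')
    (g : x ⟶ y) (S' : Set ε.A) (ψ : 𝕋 → 𝕋') (F : Set ε.A) : Prop :=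
  ε.IsFact f S g S' F ∧ φ = ψ

end InstEndorsementStructure

/-- The iEng-construction forms a bicategory. -/
theorem iEng_bicategory (ε : InstEndorsementStructure.{u, v, w, t}) :
    -- (1) Hom-categories: vertical composition of 2-cells is intersection of author sets
    -- (well-defined since parallel 2-cells only exist between 1-cells with equal token
    -- functions), associative, with identity 2-cell on `((f,S),φ)` the set `S`.
    (∀ {x y : ε.E} (T T' : Set ε.A) (𝕋 𝕋' : Set ε.Tok),
      ε.IsIType x T 𝕋 → ε.IsIType y T' 𝕋' →
      (∀ (f g h : x ⟶ y) (S S' S'' : Set ε.A) (φ ψ χ : 𝕋 → 𝕋') (F F' : Set ε.A),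
        ε.IsIAspect T T' 𝕋 𝕋' f S φ → ε.IsIAspect T T' 𝕋 𝕋' g S' ψ →
        ε.IsIAspect T T' 𝕋 𝕋' h S'' χ →
        ε.IsIFact 𝕋 𝕋' f S φ g S' ψ F → ε.IsIFact 𝕋 𝕋' g S' ψ h S'' χ F' →
        ε.IsIFact 𝕋 𝕋' f S φ h S'' χ (F ∩ F')) ∧
      (∀ (F F' F'' : Set ε.A), (F ∩ F') ∩ F'' = F ∩ (F' ∩ F'')) ∧
      (∀ (f : x ⟶ y) (S : Set ε.A) (φ : 𝕋 → 𝕋'),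
        ε.IsIAspect T T' 𝕋 𝕋' f S φ → ε.IsIFact 𝕋 𝕋' f S φ f S φ S) ∧
      (∀ (f g : x ⟶ y) (S S' : Set ε.A) (φ ψ : 𝕋 → 𝕋') (F : Set ε.A),
        ε.IsIFact 𝕋 𝕋' f S φ g S' ψ F → S ∩ F = F ∧ F ∩ S' = F)) ∧
    -- (2) Horizontal composition of 1-cells: `((f,S),φ)` and `((g,S'),ψ)` compose to
    -- `((f ≫ g, S ∩ S'), ψ ∘ φ)`; that `(t, ψ (φ t))` is an `(f ≫ g)`-correspondence
    -- according to every `a ∈ S ∩ S'` holds by the composition axiom.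
    (∀ {x y z : ε.E} (T T' T'' : Set ε.A) (𝕋 𝕋' 𝕋'' : Set ε.Tok)
      (f : x ⟶ y) (g : y ⟶ z) (S S' : Set ε.A) (φ : 𝕋 → 𝕋') (ψ : 𝕋' → 𝕋''),
      ε.IsIType x T 𝕋 → ε.IsIType y T' 𝕋' → ε.IsIType z T'' 𝕋'' →
      ε.IsIAspect T T' 𝕋 𝕋' f S φ → ε.IsIAspect T' T'' 𝕋' 𝕋'' g S' ψ →
      ε.IsIAspect T T'' 𝕋 𝕋'' (f ≫ g) (S ∩ S') (ψ ∘ φ)) ∧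
    -- (3) Horizontal composition of 2-cells is intersection.
    (∀ {x y z : ε.E} (T T' T'' : Set ε.A) (𝕋 𝕋' 𝕋'' : Set ε.Tok)
      (f f' : x ⟶ y) (g g' : y ⟶ z) (S₁ S₁' S₂ S₂' F F' : Set ε.A)
      (φ φ' : 𝕋 → 𝕋') (ψ ψ' : 𝕋' → 𝕋''),
      ε.IsIType x T 𝕋 → ε.IsIType y T' 𝕋' → ε.IsIType z T'' 𝕋'' →
      ε.IsIAspect T T' 𝕋 𝕋' f S₁ φ → ε.IsIAspect T T' 𝕋 𝕋' f' S₁' φ' →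
      ε.IsIAspect T' T'' 𝕋' 𝕋'' g S₂ ψ → ε.IsIAspect T' T'' 𝕋' 𝕋'' g' S₂' ψ' →
      ε.IsIFact 𝕋 𝕋' f S₁ φ f' S₁' φ' F → ε.IsIFact 𝕋' 𝕋'' g S₂ ψ g' S₂' ψ' F' →
      ε.IsIFact 𝕋 𝕋'' (f ≫ g) (S₁ ∩ S₂) (ψ ∘ φ) (f' ≫ g') (S₁' ∩ S₂') (ψ' ∘ φ')
        (F ∩ F')) ∧
    -- (4) Identity 1-cells: the identity 1-cell on `(x,T,𝕋)` is `((𝟙 x, T), id)`,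
    -- well-defined by the identity axiom.
    (∀ (x : ε.E) (T : Set ε.A) (𝕋 : Set ε.Tok),
      ε.IsIType x T 𝕋 → ε.IsIAspect T T 𝕋 𝕋 (𝟙 x) T (fun t => t)) ∧
    -- (5) Associators: invertible 2-cells given by the full author set of the composite;
    -- note that the token functions `(χ ∘ ψ) ∘ φ` and `χ ∘ (ψ ∘ φ)` agree.
    (∀ {x y z w : ε.E} (T₀ T₁ T₂ T₃ : Set ε.A) (𝕋₀ 𝕋₁ 𝕋₂ 𝕋₃ : Set ε.Tok)
      (f : x ⟶ y) (g : y ⟶ z) (h : z ⟶ w) (S₁ S₂ S₃ : Set ε.A)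
      (φ : 𝕋₀ → 𝕋₁) (ψ : 𝕋₁ → 𝕋₂) (χ : 𝕋₂ → 𝕋₃),
      ε.IsIType x T₀ 𝕋₀ → ε.IsIType y T₁ 𝕋₁ → ε.IsIType z T₂ 𝕋₂ → ε.IsIType w T₃ 𝕋₃ →
      ε.IsIAspect T₀ T₁ 𝕋₀ 𝕋₁ f S₁ φ → ε.IsIAspect T₁ T₂ 𝕋₁ 𝕋₂ g S₂ ψ →
      ε.IsIAspect T₂ T₃ 𝕋₂ 𝕋₃ h S₃ χ →
      ε.IsIFact 𝕋₀ 𝕋₃ ((f ≫ g) ≫ h) ((S₁ ∩ S₂) ∩ S₃) ((χ ∘ ψ) ∘ φ)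
        (f ≫ (g ≫ h)) (S₁ ∩ (S₂ ∩ S₃)) (χ ∘ (ψ ∘ φ)) (S₁ ∩ S₂ ∩ S₃) ∧
      ε.IsIFact 𝕋₀ 𝕋₃ (f ≫ (g ≫ h)) (S₁ ∩ (S₂ ∩ S₃)) (χ ∘ (ψ ∘ φ))
        ((f ≫ g) ≫ h) ((S₁ ∩ S₂) ∩ S₃) ((χ ∘ ψ) ∘ φ) (S₁ ∩ S₂ ∩ S₃) ∧
      (S₁ ∩ S₂ ∩ S₃) ∩ (S₁ ∩ S₂ ∩ S₃) = (S₁ ∩ S₂) ∩ S₃ ∧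
      (S₁ ∩ S₂ ∩ S₃) ∩ (S₁ ∩ S₂ ∩ S₃) = S₁ ∩ (S₂ ∩ S₃)) ∧
    -- (6) Left unitors: invertible.
    (∀ {x y : ε.E} (T T' : Set ε.A) (𝕋 𝕋' : Set ε.Tok) (f : x ⟶ y) (S : Set ε.A)
      (φ : 𝕋 → 𝕋'),
      ε.IsIType x T 𝕋 → ε.IsIType y T' 𝕋' → ε.IsIAspect T T' 𝕋 𝕋' f S φ →
      ε.IsIFact 𝕋 𝕋' (𝟙 x ≫ f) (T ∩ S) (φ ∘ fun t => t) f S φ (T ∩ S) ∧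
      ε.IsIFact 𝕋 𝕋' f S φ (𝟙 x ≫ f) (T ∩ S) (φ ∘ fun t => t) (T ∩ S) ∧
      (T ∩ S) ∩ (T ∩ S) = T ∩ S ∧
      (T ∩ S) ∩ (T ∩ S) = S) ∧
    -- (7) Right unitors: invertible.
    (∀ {x y : ε.E} (T T' : Set ε.A) (𝕋 𝕋' : Set ε.Tok) (f : x ⟶ y) (S : Set ε.A)
      (φ : 𝕋 → 𝕋'),
      ε.IsIType x T 𝕋 → ε.IsIType y T' 𝕋' → ε.IsIAspect T T' 𝕋 𝕋' f S φ →
      ε.IsIFact 𝕋 𝕋' (f ≫ 𝟙 y) (S ∩ T') ((fun t => t) ∘ φ) f S φ (S ∩ T') ∧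
      ε.IsIFact 𝕋 𝕋' f S φ (f ≫ 𝟙 y) (S ∩ T') ((fun t => t) ∘ φ) (S ∩ T') ∧
      (S ∩ T') ∩ (S ∩ T') = S ∩ T' ∧
      (S ∩ T') ∩ (S ∩ T') = S) ∧
    -- (8) Pentagon coherence.
    (∀ {v x y z w : ε.E} (T₀ T₁ T₂ T₃ T₄ : Set ε.A) (𝕋₀ 𝕋₁ 𝕋₂ 𝕋₃ 𝕋₄ : Set ε.Tok)
      (f : v ⟶ x) (g : x ⟶ y) (h : y ⟶ z) (i : z ⟶ w) (S₁ S₂ S₃ S₄ : Set ε.A)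
      (φ₁ : 𝕋₀ → 𝕋₁) (φ₂ : 𝕋₁ → 𝕋₂) (φ₃ : 𝕋₂ → 𝕋₃) (φ₄ : 𝕋₃ → 𝕋₄),
      ε.IsIType v T₀ 𝕋₀ → ε.IsIType x T₁ 𝕋₁ → ε.IsIType y T₂ 𝕋₂ →
      ε.IsIType z T₃ 𝕋₃ → ε.IsIType w T₄ 𝕋₄ →
      ε.IsIAspect T₀ T₁ 𝕋₀ 𝕋₁ f S₁ φ₁ → ε.IsIAspect T₁ T₂ 𝕋₁ 𝕋₂ g S₂ φ₂ →
      ε.IsIAspect T₂ T₃ 𝕋₂ 𝕋₃ h S₃ φ₃ → ε.IsIAspect T₃ T₄ 𝕋₃ 𝕋₄ i S₄ φ₄ →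
      ((S₁ ∩ S₂ ∩ S₃) ∩ S₄) ∩ (S₁ ∩ (S₂ ∩ S₃) ∩ S₄) ∩ (S₁ ∩ (S₂ ∩ S₃ ∩ S₄)) =
        ((S₁ ∩ S₂) ∩ S₃ ∩ S₄) ∩ (S₁ ∩ S₂ ∩ (S₃ ∩ S₄))) ∧
    -- (9) Triangle coherence.
    (∀ {x y z : ε.E} (T T' T'' : Set ε.A) (𝕋 𝕋' 𝕋'' : Set ε.Tok)
      (f : x ⟶ y) (g : y ⟶ z) (S₁ S₂ : Set ε.A) (φ : 𝕋 → 𝕋') (ψ : 𝕋' → 𝕋''),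
      ε.IsIType x T 𝕋 → ε.IsIType y T' 𝕋' → ε.IsIType z T'' 𝕋'' →
      ε.IsIAspect T T' 𝕋 𝕋' f S₁ φ → ε.IsIAspect T' T'' 𝕋' 𝕋'' g S₂ ψ →
      (S₁ ∩ T' ∩ S₂) ∩ (S₁ ∩ (T' ∩ S₂)) = (S₁ ∩ T') ∩ S₂) := by

  refine ⟨?_, ?_, ?_, ?_, ?_, ?_, ?_, ?_, ?_⟩
  · -- (1)
    intro x y T T' 𝕋 𝕋' _ _
    refine ⟨?_, ?_, ?_, ?_⟩
    · rintro f g h S S' S'' φ ψ χ F F' _ _ _ ⟨⟨hFs, hFe⟩, hφψ⟩ ⟨⟨hF's, hF'e⟩, hψχ⟩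
      refine ⟨⟨?_, ?_⟩, hφψ.trans hψχ⟩
      · rintro a ⟨ha, ha'⟩
        exact ⟨(hFs ha).1, (hF's ha').2⟩
      · rintro a ⟨ha, ha'⟩
        exact ε.eqv_trans a f g h (hFe a ha) (hF'e a ha')
    · intro F F' F''; exact Set.inter_assoc F F' F''
    · rintro f S φ ⟨⟨hS, hSe⟩, _⟩
      exact ⟨⟨fun a ha => ⟨ha, ha⟩, fun a ha => ε.eqv_refl a f (hSe a ha)⟩, rfl⟩
    · rintro f g S S' φ ψ F ⟨⟨hFs, _⟩, _⟩
      constructor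
      · ext a; exact ⟨fun h => h.2, fun h => ⟨(hFs h).1, h⟩⟩
      · ext a; exact ⟨fun h => h.1, fun h => ⟨h, (hFs h).2⟩⟩
  · -- (2)
    rintro x y z T T' T'' 𝕋 𝕋' 𝕋'' f g S S' φ ψ _ _ _ ⟨⟨hS, hSe⟩, hSc⟩ ⟨⟨hS', hS'e⟩, hS'c⟩
    refine ⟨⟨?_, ?_⟩, ?_⟩
    · rintro a ⟨ha, ha'⟩; exact ⟨(hS ha).1, (hS' ha').2⟩
    · rintro a ⟨ha, ha'⟩; exact ε.endMor_comp a f g (hSe a ha) (hS'e a ha')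
    · rintro t a ⟨ha, ha'⟩
      exact ε.corr_comp a f g _ _ _ (hSc t a ha) (hS'c (φ t) a ha')
  · -- (3)
    rintro x y z T T' T'' 𝕋 𝕋' 𝕋'' f f' g g' S₁ S₁' S₂ S₂' F F' φ φ' ψ ψ' _ _ _
      _ _ _ _ ⟨⟨hFs, hFe⟩, hφ⟩ ⟨⟨hF's, hF'e⟩, hψ⟩
    subst hφ hψ
    refine ⟨⟨?_, ?_⟩, rfl⟩
    · rintro a ⟨ha, ha'⟩
      exact ⟨⟨(hFs ha).1, (hF's ha').1⟩, ⟨(hFs ha).2, (hF's ha').2⟩⟩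
    · rintro a ⟨ha, ha'⟩
      exact ε.eqv_comp a f f' g g' (hFe a ha) (hF'e a ha')
  · -- (4)
    rintro x T 𝕋 ⟨hT, hTok⟩
    refine ⟨⟨fun a ha => ⟨ha, ha⟩, fun a ha => ε.endMor_id a x (hT a ha)⟩, ?_⟩
    intro t a ha
    exact ε.corr_id a x t.1 (hTok t.1 t.2 a ha)
  · -- (5)
    rintro x y z w T₀ T₁ T₂ T₃ 𝕋₀ 𝕋₁ 𝕋₂ 𝕋₃ f g h S₁ S₂ S₃ φ ψ χ _ _ _ _
      ⟨⟨hS₁, hS₁e⟩, _⟩ ⟨⟨hS₂, hS₂e⟩, _⟩ ⟨⟨hS₃, hS₃e⟩, _⟩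
    have hend : ∀ a ∈ (S₁ ∩ S₂) ∩ S₃, ε.endMor a ((f ≫ g) ≫ h) := by
      rintro a ⟨⟨ha₁, ha₂⟩, ha₃⟩
      exact ε.endMor_comp a (f ≫ g) h
        (ε.endMor_comp a f g (hS₁e a ha₁) (hS₂e a ha₂)) (hS₃e a ha₃)
    have heqv : ∀ a ∈ (S₁ ∩ S₂) ∩ S₃, ε.eqv a ((f ≫ g) ≫ h) (f ≫ (g ≫ h)) := by
      intro a ha
      have h1 := hend a ha
      rw [Category.assoc] at h1 ⊢
      exact ε.eqv_refl a _ h1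
    refine ⟨⟨⟨?_, heqv⟩, rfl⟩, ⟨⟨?_, fun a ha =>
        ε.eqv_symm a _ _ (heqv a ha)⟩, rfl⟩, Set.inter_self _, ?_⟩
    · rintro a ⟨⟨ha₁, ha₂⟩, ha₃⟩
      exact ⟨⟨⟨ha₁, ha₂⟩, ha₃⟩, ha₁, ha₂, ha₃⟩
    · rintro a ⟨⟨ha₁, ha₂⟩, ha₃⟩
      exact ⟨⟨ha₁, ha₂, ha₃⟩, ⟨⟨ha₁, ha₂⟩, ha₃⟩⟩
    · rw [Set.inter_self, Set.inter_assoc]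
  · -- (6)
    rintro x y T T' 𝕋 𝕋' f S φ ⟨hT, _⟩ _ ⟨⟨hS, hSe⟩, _⟩
    have hend : ∀ a ∈ T ∩ S, ε.endMor a (𝟙 x ≫ f) := by
      rintro a ⟨ha, ha'⟩
      exact ε.endMor_comp a (𝟙 x) f (ε.endMor_id a x (hT a ha)) (hSe a ha')
    have heqv : ∀ a ∈ T ∩ S, ε.eqv a (𝟙 x ≫ f) f := by
      intro a ha
      have h1 := hend a ha
      rw [Category.id_comp] at h1 ⊢
      exact ε.eqv_refl a _ h1
    refine ⟨⟨⟨fun a ha => ⟨ha, ha.2⟩, heqv⟩, rfl⟩,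
      ⟨⟨fun a ha => ⟨ha.2, ha⟩, fun a ha => ε.eqv_symm a _ _ (heqv a ha)⟩, rfl⟩,
      Set.inter_self _, ?_⟩
    rw [Set.inter_self]
    ext a; exact ⟨fun ha => ha.2, fun ha => ⟨(hS ha).1, ha⟩⟩
  · -- (7)
    rintro x y T T' 𝕋 𝕋' f S φ _ ⟨hT', _⟩ ⟨⟨hS, hSe⟩, _⟩
    have hend : ∀ a ∈ S ∩ T', ε.endMor a (f ≫ 𝟙 y) := by
      rintro a ⟨ha, ha'⟩
      exact ε.endMor_comp a f (𝟙 y) (hSe a ha) (ε.endMor_id a y (hT' a ha'))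
    have heqv : ∀ a ∈ S ∩ T', ε.eqv a (f ≫ 𝟙 y) f := by
      intro a ha
      have h1 := hend a ha
      rw [Category.comp_id] at h1 ⊢
      exact ε.eqv_refl a _ h1
    refine ⟨⟨⟨fun a ha => ⟨ha, ha.1⟩, heqv⟩, rfl⟩,
      ⟨⟨fun a ha => ⟨ha.1, ha⟩, fun a ha => ε.eqv_symm a _ _ (heqv a ha)⟩, rfl⟩,
      Set.inter_self _, ?_⟩
    rw [Set.inter_self]
    ext a; exact ⟨fun ha => ha.1, fun ha => ⟨ha, (hS ha).2⟩⟩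
  · -- (8)
    intro v x y z w T₀ T₁ T₂ T₃ T₄ 𝕋₀ 𝕋₁ 𝕋₂ 𝕋₃ 𝕋₄ f g h i S₁ S₂ S₃ S₄ φ₁ φ₂ φ₃ φ₄
      _ _ _ _ _ _ _ _ _
    ext a
    simp only [Set.mem_inter_iff]
    tauto
  · -- (9)
    rintro x y z T T' T'' 𝕋 𝕋' 𝕋'' f g S₁ S₂ φ ψ _ _ _ _ _
    ext a
    simp only [Set.mem_inter_iff]
    tauto
end
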